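/- Let (x,y) ∈ S. (i) If y + 1 − x = 0 and x² − x − 1 = 0 and q > 43, then (x,y) ∈ S_{01}^{01}. (ii) If y + 1 − x ≠ 0 or x² − x − 1 ≠ 0, then (x,y) ∈ S_{01}^{01} if and only if both (y + xy − x)(x − y − 1) and (y − 2x + x²)(x − y)(x − y − 1) are nonsquares, while (2xy − y² − x)(x − y)(x − y − 1) is a square. -/

import Mathlib

open scoped Classical

noncomputable section

/-- The operation of the quasigroup `Q_{a,b}`:
`u*v = u + a(v-u)` if `v-u` is a square, `u*v = u + b(v-u)` otherwise. -/
def qop {F : Type*} [Field F] (a b u v : F) : F :=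
  if IsSquare (v - u) then u + a * (v - u) else u + b * (v - u)

/-- The set `Σ(F)` of pairs `(a,b)` with `a ≠ b`, `a,b ∉ {0,1}`, and
`ab` and `(1-a)(1-b)` both squares. -/
def SigSet (F : Type*) [Field F] : Set (F × F) :=
  {p | p.1 ≠ p.2 ∧ p.1 ≠ 0 ∧ p.1 ≠ 1 ∧ p.2 ≠ 0 ∧ p.2 ≠ 1 ∧
    IsSquare (p.1 * p.2) ∧ IsSquare ((1 - p.1) * (1 - p.2))}

/-- `Q_{a,b}` is maximally nonassociative. -/
def MaxNA {F : Type*} [Field F] (a b : F) : Prop :=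
  ∀ u v w : F, qop a b (qop a b u v) w = qop a b u (qop a b v w) → u = v ∧ v = w

/-- `σ(q)`: the number of pairs `(a,b) ∈ Σ` for which `Q_{a,b}` is
maximally nonassociative. -/
def sigmaCount (F : Type*) [Field F] : ℕ :=
  Set.ncard {p : F × F | p ∈ SigSet F ∧ MaxNA p.1 p.2}

/-- The quadratic orthomorphism `ψ_{a,b}`. -/
def psiOrtho {F : Type*} [Field F] (a b u : F) : F :=
  if IsSquare u then a * u else b * u

/-- The Associativity Equation `ψ(ψ(u)-v) = ψ(-v) + ψ(u-v-ψ(-v))`. -/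
def AssocEq {F : Type*} [Field F] (a b u v : F) : Prop :=
  psiOrtho a b (psiOrtho a b u - v) =
    psiOrtho a b (-v) + psiOrtho a b (u - v - psiOrtho a b (-v))

/-- The set `S(F)` of pairs `(x,y)` of squares with `x ≠ y`, `x,y ∉ {0,1}`. -/
def SPairs (F : Type*) [Field F] : Set (F × F) :=
  {p | IsSquare p.1 ∧ IsSquare p.2 ∧ p.1 ≠ p.2 ∧ p.1 ≠ 0 ∧ p.1 ≠ 1 ∧ p.2 ≠ 0 ∧ p.2 ≠ 1}

/-- The map `Ψ : Σ → S`, `(a,b) ↦ (a/b, (1-a)/(1-b))`. -/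
def PsiMap {F : Type*} [Field F] (p : F × F) : F × F :=
  (p.1 / p.2, (1 - p.1) / (1 - p.2))

/-- The set `E(a,b)` of nonzero solutions of the Associativity Equation. -/
def ESet {F : Type*} [Field F] (a b : F) : Set (F × F) :=
  {p | p ≠ (0, 0) ∧ AssocEq a b p.1 p.2}

/-- The set `E_{ij}^{rs}(a,b)`. -/
def ESub {F : Type*} [Field F] (a b : F) (i j r s : Fin 2) : Set (F × F) :=
  {p | p ∈ ESet a b ∧ (IsSquare p.1 ↔ i = 0) ∧ (IsSquare (-p.2) ↔ j = 0) ∧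
    (IsSquare (psiOrtho a b p.1 - p.2) ↔ r = 0) ∧
    (IsSquare (p.1 - p.2 - psiOrtho a b (-p.2)) ↔ s = 0)}

/-- The set `Σ_{ij}^{rs} = {(a,b) ∈ Σ : E_{ij}^{rs}(a,b) ≠ ∅}`. -/
def SigSub (F : Type*) [Field F] (i j r s : Fin 2) : Set (F × F) :=
  {p | p ∈ SigSet F ∧ (ESub p.1 p.2 i j r s).Nonempty}

/-- The set `S_{ij}^{rs} = Ψ(Σ_{ij}^{rs})`. -/
def SSub (F : Type*) [Field F] (i j r s : Fin 2) : Set (F × F) :=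
  PsiMap '' (SigSub F i j r s)

/-!
The only Ψ-preimage of `(x, y) ∈ S` is `(a, b) = (x b, (y - 1) / (y - x))`. On the square
classes `0 1 0 1` the Associativity Equation of `ψ_{a,b}` is linear, `u c₂ = v c₁` with
`c₁ = a - 2b + b²` and `c₂ = a² - b`. Unless `c₁ = c₂ = 0`, rescaling by a square turns any
solution into `(c₁², c₁ c₂)`, so `E_{01}^{01}(a, b) ≠ ∅` says that `-c₁c₂`, `c₁c₄`, `c₁c₃`
are a nonsquare, a nonsquare, a square, where `c₃ = a c₁ - c₂` and `c₄ = c₁ - c₂ + b c₂`.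
Up to square factors these are the three products of the statement.

The case `c₁ = c₂ = 0` is `y = x - 1`, `x² = x + 1`; then `(a, b) = (A, A²)` with
`A² + A = 1`, the equation holds identically, and `(1, w)` is a solution as soon as `-w`,
`A - w`, `1 - A w` are a nonsquare, a square, a nonsquare. If `A` is a nonsquare and `-1` a
square, `w = A` works. Otherwise such a `w` is found by counting with the quadratic character
`χ`: the weight `(1 - χ(-w))(1 + χ(A - w))(1 - χ(1 - A w))` sums to
`q + 1 + ∑ χ(-w (A - w)(1 - A w)) > 0`, while its values at the two exceptional points
`w = A` and `w = A + 1` cancel.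
-/

section AssociativityEquation

variable {F : Type*} [Field F]

lemma isSquare_iff_of_mul_sq_eq {z w s t : F} (hs : s ≠ 0) (ht : t ≠ 0)
    (h : z * s ^ 2 = w * t ^ 2) : IsSquare z ↔ IsSquare w := by
  have key {z w s t : F} (hs : s ≠ 0) (h : z * s ^ 2 = w * t ^ 2) : IsSquare w → IsSquare z := by
    rintro ⟨r, rfl⟩
    exact ⟨r * t / s, by field_simp; linear_combination h⟩
  exact ⟨key ht h.symm, key hs h⟩

lemma psiOrtho_of_isSquare {a b u : F} (h : IsSquare u) : psiOrtho a b u = a * u := if_pos h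

lemma psiOrtho_of_not_isSquare {a b u : F} (h : ¬IsSquare u) : psiOrtho a b u = b * u :=
  if_neg h

lemma mem_eSub_0101_iff {a b u v : F} :
    (u, v) ∈ ESub a b 0 1 0 1 ↔ IsSquare u ∧ ¬IsSquare (-v) ∧ IsSquare (a * u - v) ∧
      ¬IsSquare (u - v + b * v) ∧ u * (a ^ 2 - b) = v * (a - 2 * b + b ^ 2) := by
  have h10 : ((1 : Fin 2) = 0) = False := eq_false (by decide)
  simp only [ESub, ESet, AssocEq, Set.mem_ofPred_eq, h10, iff_true, iff_false]
  constructor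
  · rintro ⟨⟨-, hE⟩, hu, hv, hr, hs⟩
    rw [psiOrtho_of_isSquare hu] at hr hE
    rw [psiOrtho_of_not_isSquare hv, mul_neg, sub_neg_eq_add] at hs hE
    rw [psiOrtho_of_isSquare hr, psiOrtho_of_not_isSquare hs] at hE
    exact ⟨hu, hv, hr, hs, by linear_combination hE⟩
  · rintro ⟨hu, hv, hr, hs, heq⟩
    have hv0 : v ≠ 0 := by rintro rfl; exact hv (by simp)
    rw [psiOrtho_of_isSquare hu, psiOrtho_of_not_isSquare hv, mul_neg, sub_neg_eq_add,
      psiOrtho_of_isSquare hr, psiOrtho_of_not_isSquare hs]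
    exact ⟨⟨fun h => hv0 (Prod.mk.inj h).2, by linear_combination heq⟩, hu, hv, hr, hs⟩

lemma eSub_0101_nonempty_iff {a b c₁ c₂ : F} (hc₁ : c₁ = a - 2 * b + b ^ 2)
    (hc₂ : c₂ = a ^ 2 - b) (hc : c₁ ≠ 0 ∨ c₂ ≠ 0) :
    (ESub a b 0 1 0 1).Nonempty ↔ ¬IsSquare (-(c₁ * c₂)) ∧
      ¬IsSquare (c₁ * (c₁ - c₂ + b * c₂)) ∧ IsSquare (c₁ * (a * c₁ - c₂)) := by
  constructor
  · rintro ⟨⟨u, v⟩, huv⟩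
    obtain ⟨⟨s, rfl⟩, hv, hr, hs, heq⟩ := mem_eSub_0101_iff.mp huv
    rw [← hc₁, ← hc₂] at heq
    have hs0 : s ≠ 0 := by rintro rfl; exact hv (by simpa using hr)
    have hc₁0 : c₁ ≠ 0 := by
      rintro rfl
      exact hc.resolve_left (not_not.mpr rfl) (by simpa [hs0] using heq)
    refine ⟨?_, ?_, ?_⟩
    · exact fun h => hv ((isSquare_iff_of_mul_sq_eq hs0 hc₁0
        (by linear_combination -c₁ * heq)).mp h)
    · exact fun h => hs ((isSquare_iff_of_mul_sq_eq hs0 hc₁0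
        (by linear_combination (b - 1) * c₁ * heq)).mp h)
    · exact (isSquare_iff_of_mul_sq_eq hc₁0 hs0 (by linear_combination c₁ * heq)).mp hr
  · rintro ⟨hv, hs, hr⟩
    refine ⟨(c₁ * c₁, c₁ * c₂),
      mem_eSub_0101_iff.mpr ⟨IsSquare.mul_self c₁, hv, ?_, ?_, ?_⟩⟩
    · convert hr using 1; ring
    · convert hs using 2; ring
    · rw [← hc₁, ← hc₂]; ring

end AssociativityEquation

section PsiPreimage

variable {F : Type*} [Field F]

def psiMapInv (x y : F) : F × F :=
  (x * ((y - 1) / (y - x)), (y - 1) / (y - x))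

lemma one_sub_psiMapInv {x y : F} (hxy : x ≠ y) :
    1 - (psiMapInv x y).1 = y * (1 - x) / (y - x) ∧
      1 - (psiMapInv x y).2 = (1 - x) / (y - x) := by
  have hd : y - x ≠ 0 := sub_ne_zero.mpr hxy.symm
  constructor <;> (simp only [psiMapInv]; field_simp; ring)

lemma psiMapInv_mem_sigSet {x y : F} (h : (x, y) ∈ SPairs F) : psiMapInv x y ∈ SigSet F := by
  obtain ⟨⟨r, hr⟩, ⟨t, ht⟩, hxy, hx0, hx1, hy0, hy1⟩ := h
  dsimp only at hr ht hxy hx0 hx1 hy0 hy1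
  have hd : y - x ≠ 0 := sub_ne_zero.mpr (Ne.symm hxy)
  have hb0 : (y - 1) / (y - x) ≠ 0 := div_ne_zero (sub_ne_zero.mpr hy1) hd
  obtain ⟨h1a, h1b⟩ := one_sub_psiMapInv hxy
  have h1x : 1 - x ≠ 0 := sub_ne_zero.mpr (Ne.symm hx1)
  refine ⟨fun h => hx1 (mul_right_cancel₀ hb0 (h.trans (one_mul _).symm)), mul_ne_zero hx0 hb0,
    fun h => ?_, hb0, fun h => ?_, ⟨r * ((y - 1) / (y - x)), ?_⟩,
    ⟨t * (1 - x) / (y - x), ?_⟩⟩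
  · exact div_ne_zero (mul_ne_zero hy0 h1x) hd (by rw [← h1a, h, sub_self])
  · exact div_ne_zero h1x hd (by rw [← h1b, h, sub_self])
  · simp only [psiMapInv, hr]; ring
  · rw [h1a, h1b]; linear_combination ((1 - x) / (y - x)) ^ 2 * ht

lemma psiMap_psiMapInv {x y : F} (hxy : x ≠ y) (hx1 : x ≠ 1) (hy1 : y ≠ 1) :
    PsiMap (psiMapInv x y) = (x, y) := by
  have hd : y - x ≠ 0 := sub_ne_zero.mpr hxy.symm
  obtain ⟨h1a, h1b⟩ := one_sub_psiMapInv hxy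
  rw [PsiMap, h1a, h1b]
  simp only [psiMapInv]
  field_simp

lemma eq_psiMapInv_of_psiMap_eq {a b x y : F} (hb0 : b ≠ 0) (hb1 : b ≠ 1) (hxy : x ≠ y)
    (h : PsiMap (a, b) = (x, y)) : (a, b) = psiMapInv x y := by
  have hd : y - x ≠ 0 := sub_ne_zero.mpr hxy.symm
  have h1b : 1 - b ≠ 0 := sub_ne_zero.mpr hb1.symm
  simp only [PsiMap, Prod.mk.injEq, div_eq_iff hb0, div_eq_iff h1b] at h
  obtain ⟨rfl, hy⟩ := h
  simp only [psiMapInv, Prod.mk.injEq]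
  have hb : b = (y - 1) / (y - x) := by rw [eq_div_iff hd]; linear_combination hy
  exact ⟨by rw [hb], hb⟩

lemma mem_sSub_iff {x y : F} (h : (x, y) ∈ SPairs F) (i j r s : Fin 2) :
    (x, y) ∈ SSub F i j r s ↔ (ESub (psiMapInv x y).1 (psiMapInv x y).2 i j r s).Nonempty := by
  obtain ⟨-, -, hxy, -, hx1, -, hy1⟩ := id h
  constructor
  · rintro ⟨⟨a, b⟩, ⟨⟨-, -, -, hb0, hb1, -⟩, hE⟩, hab⟩
    rwa [← eq_psiMapInv_of_psiMap_eq hb0 hb1 hxy hab]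
  · exact fun hE =>
      ⟨psiMapInv x y, ⟨psiMapInv_mem_sigSet h, hE⟩, psiMap_psiMapInv hxy hx1 hy1⟩

end PsiPreimage

section CharacterSums

variable {F : Type*} [Field F] [Fintype F]

lemma sum_comp_affine {M : Type*} [AddCommMonoid M] (g : F → M) {α : F} (hα : α ≠ 0)
    (β : F) :
    ∑ w, g (α * w + β) = ∑ w, g w :=
  Fintype.sum_bijective _ ((Equiv.mulLeft₀ α hα).trans (Equiv.addRight β)).bijective _ _
    fun _ => rfl

lemma sum_quadraticChar_affine (hF : ringChar F ≠ 2) {α : F} (hα : α ≠ 0) (β : F) :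
    ∑ w, quadraticChar F (α * w + β) = 0 :=
  (sum_comp_affine _ hα β).trans (quadraticChar_sum_zero hF)

lemma sum_quadraticChar_mul_sub_one (hF : ringChar F ≠ 2) :
    ∑ t : F, quadraticChar F (t * (t - 1)) = -1 := by
  have hJ := jacobiSum_nontrivial_inv (quadraticChar_ne_one hF)
  rw [(quadraticChar_isQuadratic F).inv, jacobiSum] at hJ
  calc ∑ t : F, quadraticChar F (t * (t - 1))
      = quadraticChar F (-1) * ∑ t : F, quadraticChar F t * quadraticChar F (1 - t) := by
        rw [Finset.mul_sum]
        refine Finset.sum_congr rfl fun t _ => ?_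
        rw [← map_mul, ← map_mul]
        ring_nf
    _ = -1 := by
        rw [hJ, mul_neg, ← sq, quadraticChar_sq_one (neg_ne_zero.mpr one_ne_zero)]

lemma sum_quadraticChar_mul_sub_mul_sub (hF : ringChar F ≠ 2) {r s : F} (hrs : r ≠ s) :
    ∑ w : F, quadraticChar F ((w - r) * (w - s)) = -1 := by
  have hδ : s - r ≠ 0 := sub_ne_zero.mpr hrs.symm
  rw [← sum_comp_affine _ hδ r, ← sum_quadraticChar_mul_sub_one hF]
  refine Finset.sum_congr rfl fun t _ => ?_
  rw [show ((s - r) * t + r - r) * ((s - r) * t + r - s) = (s - r) ^ 2 * (t * (t - 1)) by ring,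
    map_mul, quadraticChar_sq_one' hδ, one_mul]

end CharacterSums

section GoldenWitness

variable {F : Type*} [Field F] [Fintype F]

def IsGoldenWitness (A w : F) : Prop :=
  ¬IsSquare (-w) ∧ IsSquare (A - w) ∧ ¬IsSquare (1 - A * w)

-- Equal to `8` at a golden witness and to `0` at every other `w ∉ {A, A + 1}`.
def goldenWeight (A w : F) : ℤ :=
  (1 - quadraticChar F (-w)) * (1 + quadraticChar F (A - w)) * (1 - quadraticChar F (1 - A * w))

lemma isGoldenWitness_of_goldenWeight_ne_zero {A w : F} (hwA : w ≠ A) (hAw : 1 - A * w ≠ 0)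
    (h : goldenWeight A w ≠ 0) : IsGoldenWitness A w := by
  simp only [goldenWeight, ne_eq, mul_eq_zero, not_or] at h
  obtain ⟨⟨hX, hY⟩, hZ⟩ := h
  have hw0 : w ≠ 0 := by rintro rfl; simp at hZ
  refine ⟨fun hs => hX ?_, ?_, fun hs => hZ ?_⟩
  · rw [(quadraticChar_one_iff_isSquare (neg_ne_zero.mpr hw0)).mpr hs, sub_self]
  · by_contra hs
    exact hY (by rw [quadraticChar_neg_one_iff_not_isSquare.mpr hs, add_neg_cancel])
  · rw [(quadraticChar_one_iff_isSquare hAw).mpr hs, sub_self]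

lemma sum_goldenWeight (hF : ringChar F ≠ 2) {A : F} (hA : A ^ 2 + A = 1) :
    ∑ w, goldenWeight A w = 1 + ∑ w, (1 + quadraticChar F (-w * (A - w) * (1 - A * w))) := by
  have hAA : A * (A + 1) = 1 := by linear_combination hA
  have hA0 : A ≠ 0 := left_ne_zero_of_mul_eq_one hAA
  have hm1 : (-1 : F) ≠ 0 := neg_ne_zero.mpr one_ne_zero
  have hX : ∑ w : F, quadraticChar F (-w) = 0 :=
    (Finset.sum_congr rfl fun w _ => by ring_nf).trans (sum_quadraticChar_affine hF hm1 0)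
  have hY : ∑ w : F, quadraticChar F (A - w) = 0 :=
    (Finset.sum_congr rfl fun w _ => by ring_nf).trans (sum_quadraticChar_affine hF hm1 A)
  have hZ : ∑ w : F, quadraticChar F (1 - A * w) = 0 :=
    (Finset.sum_congr rfl fun w _ => by ring_nf).trans
      (sum_quadraticChar_affine hF (neg_ne_zero.mpr hA0) 1)
  have hXY : ∑ w : F, quadraticChar F (-w * (A - w)) = -1 :=
    (Finset.sum_congr rfl fun w _ => by ring_nf).trans
      (sum_quadraticChar_mul_sub_mul_sub hF hA0.symm)
  have hXZ : ∑ w : F, quadraticChar F (-w * (1 - A * w)) = -quadraticChar F A := by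
    rw [← mul_neg_one, ← sum_quadraticChar_mul_sub_mul_sub hF
      (right_ne_zero_of_mul_eq_one hAA).symm, Finset.mul_sum]
    refine Finset.sum_congr rfl fun w _ => ?_
    rw [← map_mul]
    congr 1
    linear_combination w * hA
  have hYZ : ∑ w : F, quadraticChar F ((A - w) * (1 - A * w)) = -quadraticChar F A := by
    rw [← mul_neg_one, ← sum_quadraticChar_mul_sub_mul_sub hF (by simp : A ≠ A + 1),
      Finset.mul_sum]
    refine Finset.sum_congr rfl fun w _ => ?_
    rw [← map_mul]
    congr 1
    linear_combination (w - A) * hA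
  have hexp : ∀ w, goldenWeight A w = (1 + quadraticChar F (-w * (A - w) * (1 - A * w)))
      - quadraticChar F (-w) + quadraticChar F (A - w) - quadraticChar F (1 - A * w)
      - quadraticChar F (-w * (A - w)) + quadraticChar F (-w * (1 - A * w))
      - quadraticChar F ((A - w) * (1 - A * w)) := by
    intro w
    simp only [goldenWeight, map_mul]
    ring
  simp only [Fintype.sum_congr _ _ hexp, Finset.sum_add_distrib, Finset.sum_sub_distrib,
    hX, hY, hZ, hXY, hXZ, hYZ]
  ring

lemma sum_goldenWeight_pos (hF : ringChar F ≠ 2) {A : F} (hA : A ^ 2 + A = 1) :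
    0 < ∑ w, goldenWeight A w := by
  rw [sum_goldenWeight hF hA]
  have hχ : ∀ z : F, 0 ≤ 1 + quadraticChar F z := fun z => by
    rcases quadraticChar_isQuadratic F z with h | h | h <;> rw [h] <;> norm_num
  linarith [Finset.sum_nonneg fun w (_ : w ∈ Finset.univ) => hχ (-w * (A - w) * (1 - A * w))]

lemma goldenWeight_add_goldenWeight {A : F} (hA : A ^ 2 + A = 1)
    (hcase : IsSquare A ∨ ¬IsSquare (-1 : F)) :
    goldenWeight A A + goldenWeight A (A + 1) = 0 := by
  have hAA : A * (A + 1) = 1 := by linear_combination hA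
  have hA0 : A ≠ 0 := left_ne_zero_of_mul_eq_one hAA
  have hneg (z : F) : quadraticChar F (-z) = quadraticChar F (-1) * quadraticChar F z := by
    rw [← map_mul, neg_one_mul]
  have hA1 : quadraticChar F (A + 1) = quadraticChar F A := by
    rw [show A + 1 = A * (A + 1) ^ 2 by linear_combination -(A + 1) * hAA, map_mul,
      quadraticChar_sq_one' (right_ne_zero_of_mul_eq_one hAA), mul_one]
  simp only [goldenWeight, sub_self, hneg A, hneg (A + 1), hA1,
    show 1 - A * A = A by linear_combination -hA, show A - (A + 1) = -1 by ring,
    show 1 - A * (A + 1) = 0 by linear_combination -hAA, quadraticChar_zero]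
  rcases hcase with hs | hs
  · rw [(quadraticChar_one_iff_isSquare hA0).mpr hs]
    linear_combination -quadraticChar_sq_one (neg_ne_zero.mpr (one_ne_zero (α := F)))
  · rw [quadraticChar_neg_one_iff_not_isSquare.mpr hs]
    linear_combination -quadraticChar_sq_one hA0

lemma exists_isGoldenWitness (hF : ringChar F ≠ 2) {A : F} (hA : A ^ 2 + A = 1) :
    ∃ w, IsGoldenWitness A w := by
  have hAA : A * (A + 1) = 1 := by linear_combination hA
  by_cases hcase : IsSquare A ∨ ¬IsSquare (-1 : F)
  · by_contra hno
    push Not at hno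
    have hsupp : ∑ w, goldenWeight A w = ∑ w ∈ {A, A + 1}, goldenWeight A w := by
      refine (Finset.sum_subset (Finset.subset_univ _) fun w _ hw => ?_).symm
      simp only [Finset.mem_insert, Finset.mem_singleton, not_or] at hw
      by_contra h
      refine hno w (isGoldenWitness_of_goldenWeight_ne_zero hw.1 (fun hAw => hw.2 ?_) h)
      linear_combination -(A + 1) * hAw - w * hAA
    have hpos := sum_goldenWeight_pos hF hA
    rw [hsupp, Finset.sum_pair (by simp), goldenWeight_add_goldenWeight hA hcase] at hpos
    exact hpos.false
  · push Not at hcase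
    obtain ⟨hAns, ⟨i, hi⟩⟩ := hcase
    refine ⟨A, fun ⟨r, hr⟩ => hAns ⟨i * r, by linear_combination -hr + r ^ 2 * hi⟩,
      by simp, ?_⟩
    rwa [show 1 - A * A = A by linear_combination -hA]

end GoldenWitness

section Characterisation

variable {F : Type*} [Field F]

lemma eSub_0101_nonempty_of_isGoldenWitness {A w : F} (hA : A ^ 2 + A = 1)
    (hw : IsGoldenWitness A w) : (ESub A (A ^ 2) 0 1 0 1).Nonempty := by
  obtain ⟨hX, hY, hZ⟩ := hw
  refine ⟨(1, w), mem_eSub_0101_iff.mpr ⟨IsSquare.one, hX, by rwa [mul_one], ?_, ?_⟩⟩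
  · rwa [show 1 - w + A ^ 2 * w = 1 - A * w by linear_combination w * hA]
  · linear_combination -w * (A ^ 2 - A) * hA

lemma mem_sSub_0101_of_golden [Fintype F] (hF : ringChar F ≠ 2) {x y : F}
    (hxy : (x, y) ∈ SPairs F) (h₁ : y + 1 - x = 0) (h₂ : x ^ 2 - x - 1 = 0) :
    (x, y) ∈ SSub F 0 1 0 1 := by
  obtain rfl : y = x - 1 := by linear_combination h₁
  have hpre : psiMapInv x (x - 1) = (x - 1, (x - 1) ^ 2) := by
    have hb : (x - 1 - 1) / (x - 1 - x) = (x - 1) ^ 2 := by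
      rw [div_eq_iff (by simp)]
      linear_combination h₂
    rw [psiMapInv, hb]
    congr 1
    linear_combination (x - 1) * h₂
  have hA : (x - 1) ^ 2 + (x - 1) = 1 := by linear_combination h₂
  rw [mem_sSub_iff hxy, hpre]
  obtain ⟨w, hw⟩ := exists_isGoldenWitness hF hA
  exact eSub_0101_nonempty_of_isGoldenWitness hA hw

lemma mem_sSub_0101_iff {x y : F} (hxy : (x, y) ∈ SPairs F)
    (hcase : y + 1 - x ≠ 0 ∨ x ^ 2 - x - 1 ≠ 0) :
    (x, y) ∈ SSub F 0 1 0 1 ↔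
      ¬IsSquare ((y + x * y - x) * (x - y - 1)) ∧
      ¬IsSquare ((y - 2 * x + x ^ 2) * (x - y) * (x - y - 1)) ∧
      IsSquare ((2 * x * y - y ^ 2 - x) * (x - y) * (x - y - 1)) := by
  obtain ⟨-, ⟨t, ht⟩, hne, -, hx1, hy0, hy1⟩ := id hxy
  dsimp only at ht hne hx1 hy0 hy1
  have hd : y - x ≠ 0 := sub_ne_zero.mpr (Ne.symm hne)
  have hk : (y - 1) * (x - 1) ≠ 0 := mul_ne_zero (sub_ne_zero.mpr hy1) (sub_ne_zero.mpr hx1)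
  set b := (y - 1) / (y - x) with hb
  set c₁ := x * b - 2 * b + b ^ 2 with hc₁
  set c₂ := (x * b) ^ 2 - b with hc₂
  have hc₁' : c₁ * (y - x) ^ 2 = (y - 1) * (x - 1) * (y + 1 - x) := by
    rw [hc₁, hb]; field_simp; ring
  have hc₂' : c₂ * (y - x) ^ 2 = (y - 1) * (x - 1) * (y + x * y - x) := by
    rw [hc₂, hb]; field_simp; ring
  have hc : c₁ ≠ 0 ∨ c₂ ≠ 0 := by
    by_contra! h
    rw [h.1, zero_mul, eq_comm, mul_eq_zero, or_iff_right hk] at hc₁'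
    rw [h.2, zero_mul, eq_comm, mul_eq_zero, or_iff_right hk] at hc₂'
    exact hcase.elim (· hc₁') (· (by linear_combination hc₂' - (x + 1) * hc₁'))
  rw [mem_sSub_iff hxy]
  change (ESub (x * b) b 0 1 0 1).Nonempty ↔ _
  rw [eSub_0101_nonempty_iff hc₁ hc₂ hc]
  refine and_congr (not_congr ?_) (and_congr (not_congr ?_) ?_)
  · refine isSquare_iff_of_mul_sq_eq (pow_ne_zero 2 hd) hk ?_
    rw [hc₁, hc₂, hb]; field_simp; ring
  · have ht0 : t ≠ 0 := by rintro rfl; exact hy0 (by simpa using ht)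
    refine isSquare_iff_of_mul_sq_eq (pow_ne_zero 3 hd) (mul_ne_zero hk ht0) ?_
    have hid : c₁ * (c₁ - c₂ + b * c₂) * ((y - x) ^ 3) ^ 2 =
        y * ((y - 2 * x + x ^ 2) * (x - y) * (x - y - 1)) * ((y - 1) * (x - 1)) ^ 2 := by
      rw [hc₁, hc₂, hb]; field_simp; ring
    linear_combination
      hid + (y - 2 * x + x ^ 2) * (x - y) * (x - y - 1) * ((y - 1) * (x - 1)) ^ 2 * ht
  · refine isSquare_iff_of_mul_sq_eq (pow_ne_zero 3 hd) hk ?_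
    rw [hc₁, hc₂, hb]; field_simp; ring

end Characterisation

/-- Lemma 2.7: membership in `S_{01}^{01}` for `(x,y) ∈ S`. -/
theorem ssub_0101_characterisation (F : Type*) [Field F] [Fintype F]
    (hodd : Odd (Fintype.card F)) (x y : F) (hxy : (x, y) ∈ SPairs F) :
    (y + 1 - x = 0 → x ^ 2 - x - 1 = 0 → 43 < Fintype.card F →
      (x, y) ∈ SSub F 0 1 0 1) ∧
    ((y + 1 - x ≠ 0 ∨ x ^ 2 - x - 1 ≠ 0) →
      ((x, y) ∈ SSub F 0 1 0 1 ↔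
        ¬ IsSquare ((y + x * y - x) * (x - y - 1)) ∧
        ¬ IsSquare ((y - 2 * x + x ^ 2) * (x - y) * (x - y - 1)) ∧
        IsSquare ((2 * x * y - y ^ 2 - x) * (x - y) * (x - y - 1)))) := by
  have hF : ringChar F ≠ 2 := fun h =>
    Nat.not_even_iff_odd.mpr hodd (Nat.even_iff.mpr (FiniteField.even_card_iff_char_two.mp h))
  exact ⟨fun h₁ h₂ _ => mem_sSub_0101_of_golden hF hxy h₁ h₂, mem_sSub_0101_iff hxy⟩
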